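/- Suppose the kernel K on ℝⁿ satisfies |K(x)| ≤ A/|x|^n and the Hörmander-type smoothness condition |K(x-y) - K(x)| ≤ μ(|y|/|x|) |x|^{-n} for all |x| ≥ 2|y|, where μ is non-decreasing. Let φ ∈ C_0^∞(ℝⁿ) with ∫φ = 1, supp φ ⊆ {|y| ≤ 2^{-5}}, and φ_a(x) = a^{-n}φ(x/a). Fix N > 0, j ≥ 1, σ ∈ (0,1), a = 2^{j(1-σ)}/N, and let K_j(y) = ψ(2^{-j} N y) K(y) for a fixed bump ψ supported in {1/4 < |y| ≤ 1}. Then for y in the support of K_j - K_j * φ_a one has |K_j(y) - (K_j * φ_a)(y)| ≤ C (2^{-jσ} + μ(2^{-jσ-2})) |y|^{-n}, with C depending only on n, A, ‖∇ψ‖_∞, ‖φ‖_∞. -/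

import Mathlib

open MeasureTheory Set ENNReal

/-- The dilated bump `φ_a(x) = a^{-n} φ(x/a)`. -/
noncomputable def dilate {n : ℕ} (φ : EuclideanSpace ℝ (Fin n) → ℝ) (a : ℝ)
    (x : EuclideanSpace ℝ (Fin n)) : ℝ := (a ^ n)⁻¹ * φ (a⁻¹ • x)

/-- The localized kernel `K_j(y) = ψ(2^{-j} N y) K(y)`. -/
noncomputable def Kloc {n : ℕ} (ψ K : EuclideanSpace ℝ (Fin n) → ℝ) (N : ℝ) (j : ℕ)
    (y : EuclideanSpace ℝ (Fin n)) : ℝ := ψ (((2:ℝ) ^ (-(j:ℝ)) * N) • y) * K y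

/-- `K_j * φ_a`. -/
noncomputable def KlocConv {n : ℕ} (ψ K φ : EuclideanSpace ℝ (Fin n) → ℝ)
    (N a : ℝ) (j : ℕ) (y : EuclideanSpace ℝ (Fin n)) : ℝ :=
  ∫ z, Kloc ψ K N j z * dilate φ a (y - z)

set_option maxHeartbeats 1000000 in
/-- estimate for `R_j = K_j - K_j * φ_a` on its support:
`|R_j(y)| ≤ C (2^{-jσ} + μ(2^{-jσ-2})) |y|^{-n}` with `C = C(n, A, ‖∇ψ‖_∞, ‖φ‖_∞)`. -/
theorem stmt7 (n : ℕ) (A : ℝ) (hA : 0 < A)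
    (ψ φ : EuclideanSpace ℝ (Fin n) → ℝ)
    (hψs : ContDiff ℝ (⊤ : ℕ∞) ψ) (hψ0 : ∀ y, 0 ≤ ψ y)
    (hψsupp : Function.support ψ ⊆ {y | 1/4 < ‖y‖ ∧ ‖y‖ ≤ 1})
    (hφs : ContDiff ℝ (⊤ : ℕ∞) φ) (hφ0 : ∀ y, 0 ≤ φ y)
    (hφsupp : Function.support φ ⊆ Metric.closedBall 0 ((2:ℝ) ^ (-(5:ℝ))))
    (hφint : ∫ y, φ y = 1) :
    ∃ C : ℝ, 0 < C ∧
      ∀ (K : EuclideanSpace ℝ (Fin n) → ℝ) (μ : ℝ → ℝ) (N σ : ℝ) (j : ℕ),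
        Measurable K →
        (∀ x : EuclideanSpace ℝ (Fin n), x ≠ 0 → |K x| ≤ A / ‖x‖ ^ n) →
        (∀ x y : EuclideanSpace ℝ (Fin n), x ≠ 0 → 2 * ‖y‖ ≤ ‖x‖ →
          |K (x - y) - K x| ≤ μ (‖y‖ / ‖x‖) * ‖x‖ ^ (-(n:ℝ))) →
        MonotoneOn μ (Set.Ioi (0:ℝ)) → (∀ t, 0 < t → 0 ≤ μ t) →
        0 < N → 0 < σ → σ < 1 → 1 ≤ j →
        ∀ y : EuclideanSpace ℝ (Fin n),
          Kloc ψ K N j y -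
              KlocConv ψ K φ N ((2:ℝ) ^ ((j:ℝ) * (1 - σ)) / N) j y ≠ 0 →
          |Kloc ψ K N j y -
              KlocConv ψ K φ N ((2:ℝ) ^ ((j:ℝ) * (1 - σ)) / N) j y|
            ≤ C * ((2:ℝ) ^ (-(j:ℝ) * σ) + μ ((2:ℝ) ^ (-(j:ℝ) * σ - 2))) *
                ‖y‖ ^ (-(n:ℝ)) := by
  classical
  have hψcs : HasCompactSupport ψ :=
    HasCompactSupport.intro (isCompact_closedBall (0 : EuclideanSpace ℝ (Fin n)) 1)
      (fun x hx => by
        by_contra h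
        exact hx (mem_closedBall_zero_iff.2 (hψsupp (Function.mem_support.2 h)).2))
  obtain ⟨M, hM⟩ := hψcs.exists_bound_of_continuous hψs.continuous
  have hM0 : 0 ≤ M := le_trans (norm_nonneg _) (hM 0)
  obtain ⟨L, hL⟩ := hψs.lipschitzWith_of_hasCompactSupport hψcs (by simp)
  have hφcs : HasCompactSupport φ :=
    HasCompactSupport.intro (isCompact_closedBall (0 : EuclideanSpace ℝ (Fin n)) ((2:ℝ)^(-(5:ℝ))))
      (fun x hx => by
        by_contra h
        exact hx (hφsupp (Function.mem_support.2 h)))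
  obtain ⟨Mφ, hMφ⟩ := hφcs.exists_bound_of_continuous hφs.continuous
  have hMφ0 : 0 ≤ Mφ := le_trans (norm_nonneg _) (hMφ 0)
  set G : ℝ := (L:ℝ) * A * 6 ^ n with hG
  have hG0 : 0 ≤ G := by positivity
  refine ⟨M + G + 1, by linarith, ?_⟩
  intro K μ N σ j hKm hKbd hKsm hμmono hμ0 hN hσ0 hσ1 hj y hy
  set P : ℝ := (2:ℝ) ^ (j:ℝ) with hPdef
  have hP : 0 < P := Real.rpow_pos_of_pos two_pos _
  set r : ℝ := P / N with hrdef
  have hr : 0 < r := div_pos hP hN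
  set τ : ℝ := (2:ℝ) ^ (-(j:ℝ) * σ) with hτdef
  have hτ : 0 < τ := Real.rpow_pos_of_pos two_pos _
  have hj1 : (1:ℝ) ≤ (j:ℝ) := by exact_mod_cast hj
  have hτ1 : τ ≤ 1 := Real.rpow_le_one_of_one_le_of_nonpos one_le_two
    (by have : 0 ≤ (j:ℝ) * σ := mul_nonneg (by linarith) hσ0.le; linarith)
  set c : ℝ := (2:ℝ) ^ (-(j:ℝ)) * N with hcdef
  have hc : 0 < c := mul_pos (Real.rpow_pos_of_pos two_pos _) hN
  have hcr : c * r = 1 := by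
    rw [hcdef, hrdef, hPdef, Real.rpow_neg (by norm_num : (0:ℝ) ≤ 2)]
    field_simp
  set a : ℝ := (2:ℝ) ^ ((j:ℝ) * (1 - σ)) / N with hadef
  have haτ : a = r * τ := by
    rw [hadef, hrdef, hτdef, hPdef,
      show (j:ℝ) * (1 - σ) = (j:ℝ) + (-(j:ℝ) * σ) by ring, Real.rpow_add two_pos]
    ring
  have ha : 0 < a := by rw [haτ]; positivity
  have har : a ≤ r := by
    rw [haτ]
    calc r * τ ≤ r * 1 := mul_le_mul_of_nonneg_left hτ1 hr.le
    _ = r := mul_one r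
  have hca : c * a = τ := by
    rw [haτ, show c * (r * τ) = (c * r) * τ by ring, hcr, one_mul]
  set t₂ : ℝ := (2:ℝ) ^ (-(j:ℝ) * σ - 2) with ht₂def
  have ht₂pos : 0 < t₂ := Real.rpow_pos_of_pos two_pos _
  have h4 : (2:ℝ) ^ (-2:ℝ) = 1/4 := by
    rw [show (-2:ℝ) = ((-2:ℤ):ℝ) by norm_num, Real.rpow_intCast]; norm_num
  have ht₂ : t₂ = τ / 4 := by
    rw [ht₂def, hτdef, show -(j:ℝ) * σ - 2 = (-(j:ℝ) * σ) + (-2) by ring,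
      Real.rpow_add two_pos, h4]
    ring
  have hμt₂ : 0 ≤ μ t₂ := hμ0 _ ht₂pos
  have hcv : c = 1 / r := by rw [eq_div_iff hr.ne']; exact hcr
  -- support of ψ(c•z)
  have hψz : ∀ z : EuclideanSpace ℝ (Fin n), ψ (c • z) ≠ 0 → r/4 < ‖z‖ ∧ ‖z‖ ≤ r := by
    intro z hz
    have hmem := hψsupp (Function.mem_support.2 hz)
    rw [mem_setOf_eq, norm_smul, Real.norm_eq_abs, abs_of_pos hc] at hmem
    constructor
    · have h1 := hmem.1
      rw [hcv, div_mul_eq_mul_div, one_mul, lt_div_iff₀ hr] at h1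
      linarith
    · have h2 := hmem.2
      rw [hcv, div_mul_eq_mul_div, one_mul, div_le_one hr] at h2
      exact h2
  have hKloc_ne : ∀ z, Kloc ψ K N j z ≠ 0 → r/4 < ‖z‖ ∧ ‖z‖ ≤ r := by
    intro z hz
    refine hψz z ?_
    intro h
    apply hz
    simp only [Kloc, ← hcdef, h, zero_mul]
  -- support of dilate
  have h32 : (2:ℝ) ^ (-(5:ℝ)) = 1/32 := by
    rw [show (-(5:ℝ)) = ((-5:ℤ):ℝ) by norm_num, Real.rpow_intCast]; norm_num
  have hφz : ∀ w, dilate φ a w ≠ 0 → ‖w‖ ≤ a/32 := by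
    intro w hw
    have hφw : φ (a⁻¹ • w) ≠ 0 := by
      intro h
      exact hw (by simp [dilate, h])
    have hmem := hφsupp (Function.mem_support.2 hφw)
    rw [mem_closedBall_zero_iff, norm_smul, Real.norm_eq_abs,
      abs_of_pos (inv_pos.2 ha), h32, inv_mul_le_iff₀ ha] at hmem
    linarith
  have hφa0 : ∀ w, 0 ≤ dilate φ a w := fun w => mul_nonneg (by positivity) (hφ0 _)
  -- bound for Kloc
  set B : ℝ := M * (A * (4/r)^n) with hBdef
  have hB0 : 0 ≤ B := by positivity
  have hKloc_bd : ∀ u, |Kloc ψ K N j u| ≤ B := by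
    intro u
    by_cases hu : Kloc ψ K N j u = 0
    · rw [hu, abs_zero]; exact hB0
    · obtain ⟨h1, h2⟩ := hKloc_ne u hu
      have hu0 : u ≠ 0 := by
        intro h; rw [h, norm_zero] at h1; linarith
      have hpow : (r/4)^n ≤ ‖u‖^n := pow_le_pow_left₀ (by positivity) (by linarith) n
      have hKu' : |K u| ≤ A * (4/r)^n := by
        calc |K u| ≤ A / ‖u‖^n := hKbd u hu0
        _ ≤ A / (r/4)^n := by gcongr <;> positivity
        _ = A * (4/r)^n := by rw [div_eq_mul_inv, ← inv_pow, inv_div]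
      have hMy : |ψ (c • u)| ≤ M := by simpa [Real.norm_eq_abs] using hM (c • u)
      calc |Kloc ψ K N j u| = |ψ (c • u)| * |K u| := by
            simp only [Kloc, ← hcdef, abs_mul]
      _ ≤ M * (A * (4/r)^n) := mul_le_mul hMy hKu' (abs_nonneg _) hM0
  -- measurability and integrability
  have hKlocm : Measurable (Kloc ψ K N j) := by
    unfold Kloc
    exact (hψs.continuous.measurable.comp (measurable_const_smul _)).mul hKm
  have hφacont : Continuous (dilate φ a) := by
    unfold dilate
    exact continuous_const.mul (hφs.continuous.comp (continuous_const_smul _))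
  have hφacs : HasCompactSupport (dilate φ a) :=
    HasCompactSupport.intro (isCompact_closedBall 0 (a/32)) (fun x hx => by
      by_contra h
      exact hx (mem_closedBall_zero_iff.2 (hφz x h)))
  have hφaint : Integrable (dilate φ a) := hφacont.integrable_of_hasCompactSupport hφacs
  have hφaone : ∫ w, dilate φ a w = 1 := by
    unfold dilate
    rw [integral_const_mul, Measure.integral_comp_inv_smul_of_nonneg volume φ ha.le,
      finrank_euclideanSpace_fin, smul_eq_mul, hφint, mul_one,
      inv_mul_cancel₀ (pow_ne_zero _ ha.ne')]
  have hφabd : ∀ w, |dilate φ a w| ≤ (a^n)⁻¹ * Mφ := by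
    intro w
    unfold dilate
    rw [abs_mul, abs_of_nonneg (by positivity : (0:ℝ) ≤ ((a:ℝ)^n)⁻¹)]
    exact mul_le_mul_of_nonneg_left (by simpa [Real.norm_eq_abs] using hMφ (a⁻¹ • w))
      (by positivity)
  have hint1 : Integrable (fun z => Kloc ψ K N j z * dilate φ a (y - z)) := by
    have hind : Integrable ((Metric.closedBall (0:EuclideanSpace ℝ (Fin n)) r).indicator
        fun _ => B * ((a^n)⁻¹ * Mφ)) :=
      (integrableOn_const measure_closedBall_lt_top.ne).integrable_indicator
        measurableSet_closedBall
    apply Integrable.mono' hind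
    · exact (hKlocm.mul
        ((hφacont.comp (continuous_const.sub continuous_id)).measurable)).aestronglyMeasurable
    · filter_upwards with z
      by_cases hz : z ∈ Metric.closedBall (0:EuclideanSpace ℝ (Fin n)) r
      · rw [indicator_of_mem hz, Real.norm_eq_abs, abs_mul]
        exact mul_le_mul (hKloc_bd z) (hφabd _) (abs_nonneg _) hB0
      · rw [indicator_of_notMem hz]
        have hz' : Kloc ψ K N j z = 0 := by
          by_contra h
          exact hz (mem_closedBall_zero_iff.2 (hKloc_ne z h).2)
        simp [hz']
  have hint2 : Integrable (fun w => Kloc ψ K N j (y - w) * dilate φ a w) := by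
    have hind : Integrable ((Metric.closedBall (0:EuclideanSpace ℝ (Fin n)) (a/32)).indicator
        fun _ => B * ((a^n)⁻¹ * Mφ)) :=
      (integrableOn_const measure_closedBall_lt_top.ne).integrable_indicator
        measurableSet_closedBall
    apply Integrable.mono' hind
    · exact ((hKlocm.comp (measurable_const.sub measurable_id)).mul
        hφacont.measurable).aestronglyMeasurable
    · filter_upwards with w
      by_cases hw : w ∈ Metric.closedBall (0:EuclideanSpace ℝ (Fin n)) (a/32)
      · rw [indicator_of_mem hw, Real.norm_eq_abs, abs_mul]
        exact mul_le_mul (hKloc_bd _) (hφabd _) (abs_nonneg _) hB0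
      · rw [indicator_of_notMem hw]
        have hw' : dilate φ a w = 0 := by
          by_contra h
          exact hw (mem_closedBall_zero_iff.2 (hφz w h))
        simp [hw']
  have hint0 : Integrable (fun w => Kloc ψ K N j y * dilate φ a w) := hφaint.const_mul _
  -- support of R
  have hylo : 7*r/32 < ‖y‖ := by
    by_contra hcon
    push_neg at hcon
    apply hy
    have h1 : Kloc ψ K N j y = 0 := by
      by_contra h
      have := (hKloc_ne y h).1
      linarith
    have hzero : ∀ z, Kloc ψ K N j z * dilate φ a (y - z) = 0 := by
      intro z
      by_contra hz
      have h3 := (hKloc_ne z (left_ne_zero_of_mul hz)).1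
      have h4 := hφz _ (right_ne_zero_of_mul hz)
      have h5 : ‖z‖ ≤ ‖y‖ + ‖y - z‖ := by
        calc ‖z‖ = ‖y - (y - z)‖ := by rw [_root_.sub_sub_cancel]
        _ ≤ ‖y‖ + ‖y - z‖ := norm_sub_le _ _
      linarith
    have h2 : KlocConv ψ K φ N a j y = 0 := by
      unfold KlocConv
      simp only [hzero]
      exact integral_zero _ _
    rw [h1, h2, sub_zero]
  have hyhi : ‖y‖ ≤ 33*r/32 := by
    by_contra hcon
    push_neg at hcon
    apply hy
    have h1 : Kloc ψ K N j y = 0 := by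
      by_contra h
      have := (hKloc_ne y h).2
      linarith
    have hzero : ∀ z, Kloc ψ K N j z * dilate φ a (y - z) = 0 := by
      intro z
      by_contra hz
      have h3 := (hKloc_ne z (left_ne_zero_of_mul hz)).2
      have h4 := hφz _ (right_ne_zero_of_mul hz)
      have h5 : ‖y‖ ≤ ‖z‖ + ‖y - z‖ := by
        calc ‖y‖ = ‖z + (y - z)‖ := by rw [add_sub_cancel]
        _ ≤ ‖z‖ + ‖y - z‖ := norm_add_le _ _
      linarith
    have h2 : KlocConv ψ K φ N a j y = 0 := by
      unfold KlocConv
      simp only [hzero]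
      exact integral_zero _ _
    rw [h1, h2, sub_zero]
  have hy0 : 0 < ‖y‖ := lt_trans (by linarith) hylo
  set Y : ℝ := ‖y‖ ^ (-(n:ℝ)) with hYdef
  have hYeq : Y = (‖y‖^n)⁻¹ := by
    rw [hYdef, Real.rpow_neg (norm_nonneg y), Real.rpow_natCast]
  have hY0 : 0 ≤ Y := by rw [hYeq]; positivity
  -- key identity
  have key : Kloc ψ K N j y - KlocConv ψ K φ N a j y
      = ∫ w, (Kloc ψ K N j y - Kloc ψ K N j (y - w)) * dilate φ a w := by
    have hconv : KlocConv ψ K φ N a j y = ∫ w, Kloc ψ K N j (y - w) * dilate φ a w := by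
      unfold KlocConv
      rw [← integral_sub_left_eq_self (fun w => Kloc ψ K N j (y - w) * dilate φ a w) volume y]
      simp only [_root_.sub_sub_cancel]
    have h1 : Kloc ψ K N j y = ∫ w, Kloc ψ K N j y * dilate φ a w := by
      rw [integral_const_mul, hφaone, mul_one]
    rw [hconv]
    conv_lhs => rw [h1]
    rw [← integral_sub hint0 hint2]
    congr 1
    ext w
    ring
  -- pointwise estimate
  set D : ℝ := (M + G + 1) * (τ + μ t₂) * Y with hDdef
  have hpw : ∀ w, |(Kloc ψ K N j y - Kloc ψ K N j (y - w)) * dilate φ a w|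
      ≤ D * dilate φ a w := by
    intro w
    by_cases hw : dilate φ a w = 0
    · simp [hw]
    · have hwa : ‖w‖ ≤ a/32 := hφz w hw
      rw [abs_mul, abs_of_nonneg (hφa0 w)]
      apply mul_le_mul_of_nonneg_right ?_ (hφa0 w)
      have hsplit : Kloc ψ K N j y - Kloc ψ K N j (y - w) =
          ψ (c • y) * (K y - K (y - w)) + (ψ (c • y) - ψ (c • (y - w))) * K (y - w) := by
        simp only [Kloc, ← hcdef]
        ring
      rw [hsplit]
      have hMy : |ψ (c • y)| ≤ M := by simpa [Real.norm_eq_abs] using hM (c • y)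
      have hT1 : |ψ (c • y) * (K y - K (y - w))| ≤ M * (μ t₂ * Y) := by
        by_cases hw0 : w = 0
        · rw [hw0, sub_zero, sub_self, mul_zero, abs_zero]
          positivity
        · have hwpos : 0 < ‖w‖ := norm_pos_iff.2 hw0
          have h2w : 2 * ‖w‖ ≤ ‖y‖ := by linarith
          have hy0' : y ≠ 0 := norm_pos_iff.1 hy0
          have hK1 := hKsm y w hy0' h2w
          have hle : ‖w‖/‖y‖ ≤ t₂ := by
            rw [ht₂]
            calc ‖w‖/‖y‖ ≤ (a/32)/(7*r/32) := div_le_div₀ (by positivity) hwa (by linarith) hylo.le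
            _ = τ/7 := by
                rw [haτ, show r*τ/32 = (r/32)*τ by ring, show 7*r/32 = (r/32)*7 by ring,
                  mul_div_mul_left _ _ (by positivity : (r:ℝ)/32 ≠ 0)]
            _ ≤ τ/4 := by linarith
          have hμle : μ (‖w‖/‖y‖) ≤ μ t₂ :=
            hμmono (mem_Ioi.2 (div_pos hwpos hy0)) (mem_Ioi.2 ht₂pos) hle
          calc |ψ (c • y) * (K y - K (y - w))| = |ψ (c • y)| * |K y - K (y - w)| := abs_mul _ _
          _ ≤ M * (μ t₂ * Y) := by
              apply mul_le_mul hMy ?_ (abs_nonneg _) hM0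
              rw [abs_sub_comm, hYdef]
              calc |K (y - w) - K y| ≤ μ (‖w‖/‖y‖) * ‖y‖ ^ (-(n:ℝ)) := hK1
              _ ≤ μ t₂ * ‖y‖ ^ (-(n:ℝ)) :=
                mul_le_mul_of_nonneg_right hμle (by rw [← hYdef]; exact hY0)
      have hT2 : |(ψ (c • y) - ψ (c • (y - w))) * K (y - w)| ≤ G * (τ * Y) := by
        have hyw : ‖y‖/6 ≤ ‖y - w‖ := by
          have h6 := norm_sub_norm_le y w
          linarith
        have hywpos : 0 < ‖y - w‖ := lt_of_lt_of_le (by linarith) hyw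
        have hKd : |K (y - w)| ≤ A * 6^n * Y := by
          calc |K (y - w)| ≤ A / ‖y - w‖^n := hKbd _ (norm_pos_iff.1 hywpos)
          _ ≤ A / (‖y‖/6)^n := by gcongr <;> positivity
          _ = A * 6^n * Y := by
              rw [div_eq_mul_inv, ← inv_pow, inv_div, div_pow, hYeq]
              ring
        have hψd : |ψ (c • y) - ψ (c • (y - w))| ≤ (L:ℝ) * τ := by
          have hd := hL.dist_le_mul (c • y) (c • (y - w))
          rw [Real.dist_eq] at hd
          have hdd : dist (c • y) (c • (y - w)) = c * ‖w‖ := by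
            rw [dist_eq_norm, ← smul_sub, _root_.sub_sub_cancel, norm_smul, Real.norm_eq_abs,
              abs_of_pos hc]
          rw [hdd] at hd
          have hcw : c * ‖w‖ ≤ τ := by
            have h7 : c * ‖w‖ ≤ c * (a/32) := mul_le_mul_of_nonneg_left hwa hc.le
            have h8 : c * (a/32) = τ/32 := by
              rw [show c * (a/32) = (c*a)/32 by ring, hca]
            linarith
          calc |ψ (c • y) - ψ (c • (y - w))| ≤ (L:ℝ) * (c * ‖w‖) := hd
          _ ≤ (L:ℝ) * τ := mul_le_mul_of_nonneg_left hcw L.coe_nonneg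
        calc |(ψ (c • y) - ψ (c • (y - w))) * K (y - w)|
            = |ψ (c • y) - ψ (c • (y - w))| * |K (y - w)| := abs_mul _ _
        _ ≤ ((L:ℝ) * τ) * (A * 6^n * Y) :=
            mul_le_mul hψd hKd (abs_nonneg _) (by positivity)
        _ = G * (τ * Y) := by rw [hG]; ring
      calc |ψ (c • y) * (K y - K (y - w)) + (ψ (c • y) - ψ (c • (y - w))) * K (y - w)|
          ≤ |ψ (c • y) * (K y - K (y - w))| + |(ψ (c • y) - ψ (c • (y - w))) * K (y - w)| :=
            abs_add_le _ _
      _ ≤ M * (μ t₂ * Y) + G * (τ * Y) := add_le_add hT1 hT2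
      _ ≤ D := by
          rw [hDdef]
          have hτY : 0 ≤ τ * Y := mul_nonneg hτ.le hY0
          have hμY : 0 ≤ μ t₂ * Y := mul_nonneg hμt₂ hY0
          have hkey : (M + G + 1) * (τ + μ t₂) * Y
              = M * (μ t₂ * Y) + G * (τ * Y) + ((M + 1) * (τ * Y) + (G + 1) * (μ t₂ * Y)) := by
            ring
          rw [hkey]
          have h1 : 0 ≤ (M + 1) * (τ * Y) := mul_nonneg (by linarith) hτY
          have h2 : 0 ≤ (G + 1) * (μ t₂ * Y) := mul_nonneg (by linarith) hμY
          linarith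
  -- conclusion
  have hsub : Integrable (fun w => (Kloc ψ K N j y - Kloc ψ K N j (y - w)) * dilate φ a w) := by
    have := hint0.sub hint2
    simpa [sub_mul, Pi.sub_def] using this
  rw [key]
  calc |∫ w, (Kloc ψ K N j y - Kloc ψ K N j (y - w)) * dilate φ a w|
      ≤ ∫ w, |(Kloc ψ K N j y - Kloc ψ K N j (y - w)) * dilate φ a w| := by
        simpa [Real.norm_eq_abs, abs_mul] using
          norm_integral_le_integral_norm
            (fun w => (Kloc ψ K N j y - Kloc ψ K N j (y - w)) * dilate φ a w)
  _ ≤ ∫ w, D * dilate φ a w :=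
      integral_mono hsub.abs (hφaint.const_mul D) hpw
  _ = D := by rw [integral_const_mul, hφaone, mul_one]
  _ = (M + G + 1) * (τ + μ t₂) * Y := hDdef
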